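/- arXiv:1108.5823 — 2 statements merged into one kernel-verified Lean document; each statement's English description precedes it below -/
import Mathlib

section
/- Let K be an algebraically closed field and let G be a nontrivial finite subgroup of GL(2, K) such that every element of G has the form [[ζ, a], [0, 1]] for some ζ ∈ K \ {0} and a ∈ K, and such that every non-identity element A of G has exactly one invariant line in K² (namely, all eigenvectors of A span a single one-dimensional subspace). Then K has positive characteristic p, and the order of G is a power of p. -/
private lemma upper_mulVec {K : Type*} [Field K] (ζ a x y : K) :
    (!![ζ, a; 0, 1] : Matrix (Fin 2) (Fin 2) K).mulVec ![x, y] = ![ζ*x + a*y, y] := by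
  funext i; fin_cases i <;> simp [Matrix.mulVec, dotProduct, Fin.sum_univ_two]

private lemma upper_pow {K : Type*} [Field K] (a : K) (n : ℕ) :
    (!![1, a; 0, 1] : Matrix (Fin 2) (Fin 2) K) ^ n = !![1, n * a; 0, 1] := by
  induction n with
  | zero => simp [Matrix.one_fin_two]
  | succ n ih =>
      rw [pow_succ, ih, Matrix.mul_fin_two]
      push_cast
      ring_nf

/-- If a nontrivial finite subgroup `G` of `GL(2, K)` over an algebraically
closed field consists of matrices of the form `[[ζ, a], [0, 1]]` with `ζ ≠ 0`,
and every non-identity element has exactly one invariant line in `K²`, then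
`K` has positive characteristic `p` and the order of `G` is a power of `p`. -/
theorem stmt_8 (K : Type*) [Field K] [IsAlgClosed K]
    (G : Subgroup (GL (Fin 2) K)) (hGnt : G ≠ ⊥) (hGfin : Finite G)
    (hform : ∀ M ∈ G, ∃ ζ a : K, ζ ≠ 0 ∧
      (M : Matrix (Fin 2) (Fin 2) K) = !![ζ, a; 0, 1])
    (hline : ∀ M ∈ G, M ≠ 1 →
      ∃! L : Submodule K (Fin 2 → K), Module.finrank K L = 1 ∧
        ∀ v ∈ L, (M : Matrix (Fin 2) (Fin 2) K).mulVec v ∈ L) :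
    ∃ p : ℕ, p.Prime ∧ CharP K p ∧ ∃ e : ℕ, Nat.card G = p ^ e := by
  -- Step 1: every non-identity element of G is unipotent, of the form !![1, a; 0, 1], a ≠ 0.
  have key : ∀ M ∈ G, M ≠ 1 → ∃ a : K, a ≠ 0 ∧
      (M : Matrix (Fin 2) (Fin 2) K) = !![1, a; 0, 1] := by
    intro M hM hM1
    obtain ⟨ζ, a, hζ, hmat⟩ := hform M hM
    have hζ1 : ζ = 1 := by
      by_contra hζ1
      have hne : (1 : K) - ζ ≠ 0 := sub_ne_zero.mpr (Ne.symm hζ1)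
      obtain ⟨L, hL, hLuniq⟩ := hline M hM hM1
      have v1ne : (![1, 0] : Fin 2 → K) ≠ 0 := by
        intro h
        have := congrFun h 0
        simp at this
      have v2ne : (![a, 1 - ζ] : Fin 2 → K) ≠ 0 := by
        intro h
        have := congrFun h 1
        simp at this
        exact hne this
      have hL1 : (K ∙ (![1, 0] : Fin 2 → K)) = L := by
        apply hLuniq
        refine ⟨finrank_span_singleton v1ne, ?_⟩
        intro v hv
        obtain ⟨c, rfl⟩ := Submodule.mem_span_singleton.mp hv
        rw [Matrix.mulVec_smul]
        apply Submodule.smul_mem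
        rw [hmat, Submodule.mem_span_singleton]
        exact ⟨ζ, by rw [upper_mulVec]; funext i; fin_cases i <;> simp⟩
      have hL2 : (K ∙ (![a, 1 - ζ] : Fin 2 → K)) = L := by
        apply hLuniq
        refine ⟨finrank_span_singleton v2ne, ?_⟩
        intro v hv
        obtain ⟨c, rfl⟩ := Submodule.mem_span_singleton.mp hv
        rw [Matrix.mulVec_smul]
        apply Submodule.smul_mem
        rw [hmat, Submodule.mem_span_singleton]
        refine ⟨1, ?_⟩
        rw [upper_mulVec, one_smul]
        funext i; fin_cases i <;> simp <;> ring
      have : (![a, 1 - ζ] : Fin 2 → K) ∈ (K ∙ (![1, 0] : Fin 2 → K)) := by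
        rw [hL1, ← hL2]
        exact Submodule.mem_span_singleton_self _
      obtain ⟨c, hc⟩ := Submodule.mem_span_singleton.mp this
      have := congrFun hc 1
      simp at this
      exact hne this.symm
    have ha : a ≠ 0 := by
      intro h0
      apply hM1
      apply Units.ext
      rw [hmat, hζ1, h0, ← Matrix.one_fin_two]
      rfl
    exact ⟨a, ha, by rw [hmat, hζ1]⟩
  -- Step 2: K has positive characteristic.
  obtain ⟨g, hg1⟩ := Subgroup.ne_bot_iff_exists_ne_one.mp hGnt
  have hgG : (g : GL (Fin 2) K) ∈ G := g.2
  have hgne : (g : GL (Fin 2) K) ≠ 1 := fun h => hg1 (Subtype.ext h)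
  obtain ⟨a, ha, hmat⟩ := key _ hgG hgne
  have hgord : g ^ Nat.card G = 1 := pow_card_eq_one'
  have hcardpos : 0 < Nat.card G := Nat.card_pos
  have hpow : ((g : GL (Fin 2) K) : Matrix (Fin 2) (Fin 2) K) ^ Nat.card G = 1 := by
    have : ((g ^ Nat.card G : G) : GL (Fin 2) K) = 1 := by rw [hgord]; rfl
    calc ((g : GL (Fin 2) K) : Matrix (Fin 2) (Fin 2) K) ^ Nat.card G
        = (((g : GL (Fin 2) K) ^ Nat.card G : GL (Fin 2) K) : Matrix (Fin 2) (Fin 2) K) := by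
          rw [Units.val_pow_eq_pow_val]
      _ = 1 := by rw [← SubgroupClass.coe_pow, this]; rfl
  rw [hmat, upper_pow, Matrix.one_fin_two] at hpow
  have hna : ((Nat.card G : K)) * a = 0 := by
    have := congrFun (congrFun hpow 0) 1
    simpa using this
  have hnK : ((Nat.card G : K)) = 0 := by
    rcases mul_eq_zero.mp hna with h | h
    · exact h
    · exact absurd h ha
  have hchar : ringChar K ≠ 0 := by
    intro h
    haveI : CharZero K := by
      haveI := ringChar.of_eq h
      exact CharP.charP_to_charZero K
    exact hcardpos.ne' (by exact_mod_cast hnK)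
  set p := ringChar K with hp
  have hpprime : p.Prime := (CharP.char_is_prime_or_zero K p).resolve_right hchar
  have hcharP : CharP K p := ringChar.charP K
  -- Step 3: every element of G has p-power order, so G is a p-group.
  haveI : Fact p.Prime := ⟨hpprime⟩
  have hpgroup : IsPGroup p G := by
    intro x
    refine ⟨1, ?_⟩
    rw [pow_one]
    by_cases hx : x = 1
    · rw [hx, one_pow]
    · have hxG : (x : GL (Fin 2) K) ∈ G := x.2
      have hxne : (x : GL (Fin 2) K) ≠ 1 := fun h => hx (Subtype.ext h)
      obtain ⟨b, hb, hbmat⟩ := key _ hxG hxne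
      have hpK : ((p : K)) = 0 := CharP.cast_eq_zero K p
      have : ((x : GL (Fin 2) K) : Matrix (Fin 2) (Fin 2) K) ^ p = 1 := by
        rw [hbmat, upper_pow, hpK, zero_mul, ← Matrix.one_fin_two]
      have hGL : ((x : GL (Fin 2) K)) ^ p = 1 := by
        apply Units.ext
        rw [Units.val_pow_eq_pow_val, this]; rfl
      exact Subtype.ext (by rw [SubgroupClass.coe_pow, hGL]; rfl)
  obtain ⟨e, he⟩ := IsPGroup.iff_card.mp hpgroup
  exact ⟨p, hpprime, hcharP, e, he⟩
end

section
/- Let G be a finite group acting on a set X such that every non-identity element of G fixes at least one point of X. Suppose P ∈ X is a point whose stabilizer in G is nontrivial and whose orbit under G contains at least two points. Then there exists a point P' ∈ X not lying in the orbit of P whose stabilizer in G is nontrivial. -/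
/-- If a finite group acts on a set so that every non-identity element fixes
some point, and `P` is a point with nontrivial stabilizer whose orbit has at
least two points, then some point outside the orbit of `P` also has a
nontrivial stabilizer. -/
theorem stmt_10 (G X : Type*) [Group G] [Finite G] [MulAction G X]
    (hfix : ∀ g : G, g ≠ 1 → ∃ x : X, g • x = x)
    (P : X) (hstab : MulAction.stabilizer G P ≠ ⊥)
    (horb : (MulAction.orbit G P).Nontrivial) :
    ∃ P' : X, P' ∉ MulAction.orbit G P ∧ MulAction.stabilizer G P' ≠ ⊥ := by
  classical
  by_contra hcon
  push_neg at hcon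
  cases nonempty_fintype G
  -- every non-identity element fixes a point in the orbit of P
  have hcov : ∀ g : G, g ≠ 1 → ∃ x ∈ MulAction.orbit G P, g • x = x := by
    intro g hg
    obtain ⟨x, hx⟩ := hfix g hg
    refine ⟨x, ?_, hx⟩
    by_contra hxo
    have := hcon x hxo
    have : g ∈ MulAction.stabilizer G x := hx
    rw [hcon x hxo] at this
    exact hg (Subgroup.mem_bot.mp this)
  set H := MulAction.stabilizer G P with hH
  -- the orbit as a finset
  set T : Finset X := Finset.univ.image (fun g : G => g • P) with hT
  have hmemT : ∀ x : X, x ∈ T ↔ x ∈ MulAction.orbit G P := by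
    intro x
    simp [hT, MulAction.mem_orbit_iff, eq_comm]
  -- each stabilizer of a point in T has the same cardinality as H
  have hcard : ∀ x ∈ T, (Finset.univ.filter (fun g : G => g • x = x)).card
      = Nat.card H := by
    intro x hx
    obtain ⟨g, -, rfl⟩ := Finset.mem_image.mp hx
    have : (Finset.univ.filter (fun h : G => h • (g • P) = g • P)).card
        = Nat.card (MulAction.stabilizer G (g • P)) := by
      rw [Nat.card_eq_fintype_card]
      exact (Fintype.card_subtype _).symm
    rw [this]
    exact Nat.card_congr
      (MulAction.stabilizerEquivStabilizerOfOrbitRel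
        (MulAction.mem_orbit P g : (g : G) • P ∈ MulAction.orbit G P)).toEquiv
  -- covering: G \ {1} is covered by nontrivial parts of stabilizers over T
  have hsub : (Finset.univ.erase (1 : G)) ⊆
      T.biUnion (fun x => (Finset.univ.filter (fun g : G => g • x = x)).erase 1) := by
    intro g hg
    have hg1 : g ≠ 1 := (Finset.mem_erase.mp hg).1
    obtain ⟨x, hxo, hfx⟩ := hcov g hg1
    refine Finset.mem_biUnion.mpr ⟨x, (hmemT x).mpr hxo, ?_⟩
    exact Finset.mem_erase.mpr ⟨hg1, by simpa using hfx⟩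
  -- cardinal estimates
  have hHcard : 2 ≤ Nat.card H := by
    rcases Nat.lt_or_ge (Nat.card H) 2 with h | h
    · exfalso
      apply hstab
      have : Nat.card H = 1 := by
        have : 0 < Nat.card H := Nat.card_pos
        omega
      exact Subgroup.eq_bot_of_card_eq _ this
    · exact h
  have hTcard : 2 ≤ T.card := by
    obtain ⟨a, ha, b, hb, hab⟩ := horb
    exact Finset.one_lt_card.mpr ⟨a, (hmemT a).mpr ha, b, (hmemT b).mpr hb, hab⟩
  have horbstab : T.card * Nat.card H = Nat.card G := by
    have h1 : T.card = H.index := by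
      rw [hH, MulAction.index_stabilizer, ← Set.ncard_coe_finset]
      congr 1
      ext x
      simpa using hmemT x
    rw [h1, mul_comm]
    exact Subgroup.card_mul_index H
  -- final counting contradiction
  have hle : (Finset.univ.erase (1 : G)).card ≤ T.card * (Nat.card H - 1) := by
    calc (Finset.univ.erase (1 : G)).card
        ≤ (T.biUnion (fun x =>
            (Finset.univ.filter (fun g : G => g • x = x)).erase 1)).card :=
          Finset.card_le_card hsub
      _ ≤ ∑ x ∈ T, ((Finset.univ.filter (fun g : G => g • x = x)).erase 1).card :=
          Finset.card_biUnion_le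
      _ ≤ ∑ x ∈ T, (Nat.card H - 1) := by
          apply Finset.sum_le_sum
          intro x hx
          have h1mem : (1 : G) ∈ Finset.univ.filter (fun g : G => g • x = x) :=
            Finset.mem_filter.mpr ⟨Finset.mem_univ _, one_smul G x⟩
          rw [Finset.card_erase_of_mem h1mem, hcard x hx]
      _ = T.card * (Nat.card H - 1) := by rw [Finset.sum_const, smul_eq_mul]
  have h1 : (Finset.univ.erase (1 : G)).card = Nat.card G - 1 := by
    rw [Finset.card_erase_of_mem (Finset.mem_univ 1), Finset.card_univ,
      Nat.card_eq_fintype_card]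
  rw [h1, Nat.mul_sub, mul_one, horbstab] at hle
  have hGcard : 2 ≤ Nat.card G := by
    calc 2 ≤ T.card := hTcard
      _ ≤ T.card * Nat.card H := Nat.le_mul_of_pos_right _ Nat.card_pos
      _ = Nat.card G := horbstab
  omega
end
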